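/- arXiv:1905.09209 — 2 statements merged into one kernel-verified Lean document; each statement's English description precedes it below -/
import Mathlib

section
/- Let f(u) = ln(1+exp(u)), let S = {(x_i,y_i)}_{i=1}^n ⊂ R^d × {±1} with ‖x_i‖ ≤ 1, and let α ≥ 0. Let {w_t} be generated by α-SGD with w₀ = 0, an arbitrary index sequence i₀, i₁, … in {1,…,n}, and step sizes η_j ≤ min{1, 2(1+α)^{−2}}, where z_j = −y_{i_j}x_{i_j} + α·w̄_j (w̄_j = w_j/‖w_j‖ if w_j ≠ 0, else 0) and w_{j+1} = w_j − η_j·f'(⟨w_j,z_j⟩)·z_j. Then for every w ∈ R^d and every t ≥ 1: ‖w_t − w‖² ≤ ‖w‖² + 2·Σ_{j<t} η_j·f(⟨w, z_j⟩). -/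
noncomputable def lg (u : ℝ) : ℝ := Real.log (1 + Real.exp u)
noncomputable def lg' (u : ℝ) : ℝ := Real.exp u / (1 + Real.exp u)

lemma lg_pos_den (u : ℝ) : (0:ℝ) < 1 + Real.exp u := by positivity

lemma lg_hasDeriv (u : ℝ) : HasDerivAt lg (lg' u) u := by
  have h1 : HasDerivAt (fun u => 1 + Real.exp u) (Real.exp u) u :=
    (Real.hasDerivAt_exp u).const_add 1
  exact h1.log (lg_pos_den u).ne'

lemma lg'_pos (u : ℝ) : 0 < lg' u := by
  unfold lg'; positivity

lemma lg'_le_one (u : ℝ) : lg' u ≤ 1 := by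
  unfold lg'
  rw [div_le_one (lg_pos_den u)]; linarith

lemma lg'_le_lg (u : ℝ) : lg' u ≤ lg u := by
  have h := Real.log_le_sub_one_of_pos (x := (1 + Real.exp u)⁻¹) (by positivity)
  rw [Real.log_inv] at h
  have : 1 - (1 + Real.exp u)⁻¹ ≤ lg u := by unfold lg; linarith
  refine le_trans (le_of_eq ?_) this
  unfold lg'
  have hpos := lg_pos_den u
  field_simp
  ring

lemma lg'_mono : Monotone lg' := by
  intro a b hab
  unfold lg'
  rw [div_le_div_iff₀ (lg_pos_den a) (lg_pos_den b)]
  have := Real.exp_le_exp.2 hab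
  nlinarith [Real.exp_pos a, Real.exp_pos b]

lemma lg_tangent (a b : ℝ) : lg a + lg' a * (b - a) ≤ lg b := by
  rcases lt_trichotomy a b with h | h | h
  · obtain ⟨c, hc, hceq⟩ := exists_hasDerivAt_eq_slope lg lg' h
      (fun x _ => (lg_hasDeriv x).continuousAt.continuousWithinAt)
      (fun x _ => lg_hasDeriv x)
    have hce : lg b - lg a = lg' c * (b - a) := by
      rw [eq_div_iff (sub_ne_zero.2 h.ne')] at hceq; linarith
    have := lg'_mono hc.1.le
    nlinarith
  · simp [h]
  · obtain ⟨c, hc, hceq⟩ := exists_hasDerivAt_eq_slope lg lg' h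
      (fun x _ => (lg_hasDeriv x).continuousAt.continuousWithinAt)
      (fun x _ => lg_hasDeriv x)
    have hce : lg a - lg b = lg' c * (a - b) := by
      rw [eq_div_iff (sub_ne_zero.2 h.ne')] at hceq; linarith
    have := lg'_mono hc.2.le
    nlinarith

open scoped RealInnerProductSpace

/-- for `α`-SGD on the robust logistic loss with `w₀ = 0`, an arbitrary
index sequence, and step sizes `η_j ≤ min{1, 2/(1+α)²}`, for every comparator `w` and
every `t ≥ 1`: `‖w_t − w‖² ≤ ‖w‖² + 2Σ_{j<t} η_j f(⟪w, z_j⟫)`. -/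
theorem alpha_sgd_distance_bound
    (d n : ℕ) (hn : 0 < n) (x : Fin n → EuclideanSpace ℝ (Fin d)) (y : Fin n → ℝ)
    (hx : ∀ i, ‖x i‖ ≤ 1) (hy : ∀ i, y i = 1 ∨ y i = -1)
    (α : ℝ) (hα0 : 0 ≤ α)
    (η : ℕ → ℝ) (hηpos : ∀ j, 0 < η j) (hη : ∀ j, η j ≤ min 1 (2 / (1 + α) ^ 2))
    (idx : ℕ → Fin n)
    (w : ℕ → EuclideanSpace ℝ (Fin d)) (hw0 : w 0 = 0)
    (hupd : ∀ j : ℕ, w (j + 1) = w j - η j •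
      deriv (fun u => Real.log (1 + Real.exp u))
          ⟪w j, -(y (idx j)) • x (idx j) + α • (‖w j‖⁻¹ • w j)⟫ •
        (-(y (idx j)) • x (idx j) + α • (‖w j‖⁻¹ • w j))) :
    ∀ (v : EuclideanSpace ℝ (Fin d)) (t : ℕ), 1 ≤ t →
      ‖w t - v‖ ^ 2 ≤ ‖v‖ ^ 2 + 2 * ∑ j ∈ Finset.range t, η j *
        Real.log (1 + Real.exp ⟪v, -(y (idx j)) • x (idx j) + α • (‖w j‖⁻¹ • w j)⟫) := by
  intro v
  have key : ∀ t : ℕ,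
      ‖w t - v‖ ^ 2 ≤ ‖v‖ ^ 2 + 2 * ∑ j ∈ Finset.range t, η j *
        Real.log (1 + Real.exp ⟪v, -(y (idx j)) • x (idx j) + α • (‖w j‖⁻¹ • w j)⟫) := by
    intro t
    induction t with
    | zero => simp [hw0]
    | succ j ih =>
      set z := -(y (idx j)) • x (idx j) + α • (‖w j‖⁻¹ • w j) with hz
      -- norm of z
      have hzn : ‖z‖ ≤ 1 + α := by
        have h1 : ‖(-(y (idx j))) • x (idx j)‖ ≤ 1 := by
          rw [norm_smul]
          rcases hy (idx j) with h | h <;>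
            simp [h, hx (idx j)]
        have h2 : ‖α • (‖w j‖⁻¹ • w j)‖ ≤ α := by
          rw [norm_smul, norm_smul, Real.norm_eq_abs, Real.norm_eq_abs,
            abs_of_nonneg hα0, abs_of_nonneg (by positivity : (0:ℝ) ≤ ‖w j‖⁻¹)]
          by_cases hwz : w j = 0
          · simp [hwz, hα0]
          · rw [inv_mul_cancel₀ (norm_ne_zero_iff.2 hwz), mul_one]
        calc ‖z‖ ≤ ‖(-(y (idx j))) • x (idx j)‖ + ‖α • (‖w j‖⁻¹ • w j)‖ := norm_add_le _ _
          _ ≤ 1 + α := add_le_add h1 h2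
      have hder : deriv (fun u => Real.log (1 + Real.exp u)) ⟪w j, z⟫ = lg' ⟪w j, z⟫ :=
        (lg_hasDeriv _).deriv
      set g := lg' ⟪w j, z⟫ with hg
      have hexp : w (j + 1) - v = (w j - v) - (η j * g) • z := by
        rw [hupd j, hder, smul_smul]
        abel
      have hns : ‖w (j + 1) - v‖ ^ 2
          = ‖w j - v‖ ^ 2 - 2 * (η j * g) * ⟪w j - v, z⟫ + (η j * g) ^ 2 * ‖z‖ ^ 2 := by
        rw [hexp, @norm_sub_sq_real, real_inner_smul_right, norm_smul, Real.norm_eq_abs,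
          mul_pow, sq_abs]
        ring
      have htan := lg_tangent ⟪w j, z⟫ ⟪v, z⟫
      have hg0 : 0 < g := lg'_pos _
      have hg1 : g ≤ 1 := lg'_le_one _
      have hgf : g ≤ lg ⟪w j, z⟫ := lg'_le_lg _
      have hηp := hηpos j
      have hη2 : η j * (1 + α) ^ 2 ≤ 2 := by
        have h := (hη j).trans (min_le_right _ _)
        rw [le_div_iff₀ (by positivity : (0:ℝ) < (1 + α) ^ 2)] at h
        linarith
      have hz2 : ‖z‖ ^ 2 ≤ (1 + α) ^ 2 := by nlinarith [norm_nonneg z]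
      have step : ‖w (j + 1) - v‖ ^ 2 ≤ ‖w j - v‖ ^ 2 + 2 * η j * lg ⟪v, z⟫ := by
        rw [hns, inner_sub_left]
        nlinarith [mul_le_mul_of_nonneg_left htan (le_of_lt (mul_pos hηp hg0)),
          mul_le_mul_of_nonneg_left hz2 (mul_nonneg (mul_nonneg hηp.le hηp.le) (mul_nonneg hg0.le hg0.le)),
          mul_le_mul_of_nonneg_left hη2 (mul_nonneg hηp.le (mul_nonneg hg0.le hg0.le)),
          mul_le_mul_of_nonneg_left hgf (mul_nonneg hηp.le hg0.le),
          mul_le_mul_of_nonneg_left hg1 (mul_nonneg hηp.le hg0.le)]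
      simp only [lg] at step
      rw [Finset.sum_range_succ]
      rw [← hz]
      linarith
  exact fun t _ => key t
end

section
/- Let f(u) = ln(1+exp(u)), let S = {(x_i,y_i)}_{i=1}^n ⊂ R^d × {±1} with ‖x_i‖ ≤ 1, suppose a unit vector w* satisfies y_i⟨w*,x_i⟩ ≥ γ for all i with γ ≤ 1, and let 0 ≤ α < γ. Let {w_t} be generated by α-SGD with w₀ = 0, an arbitrary index sequence i₀, i₁, … in {1,…,n}, and step sizes η_j ≤ min{1, 2(1+α)^{−2}}. For t ≥ 1 define u_t = (ln(t)/(γ−α))·w*. Then ‖w_t − u_t‖² ≤ ln(t)²/(γ−α)² + 2. -/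
/-!
Write `u = (ln t / (γ - α)) • w*`. Each α-SGD step is a gradient step of the logistic loss, whose
derivative is the sigmoid `σ`, along a direction `z` with `‖z‖ ≤ 1 + α` and `⟪u, z⟫ ≤ -ln t`.
Expanding the square, the step raises `‖w - u‖²` by at most `2 η σ(s) (1 - ln t - s)` with
`s = ⟪w, z⟫`, and `σ(s) (C - s) ≤ exp (C - 1)` bounds this by `2 / t` whatever `s` is.
After `t` steps from `w₀ = 0` this gives `‖w_t - u‖² ≤ ‖u‖² + 2`.
-/

open scoped RealInnerProductSpace

namespace Real

lemma hasDerivAt_log_one_add_exp (s : ℝ) :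
    HasDerivAt (fun u => log (1 + exp u)) (sigmoid s) s := by
  convert ((hasDerivAt_exp s).const_add 1).log (by positivity) using 1
  rw [sigmoid_def, exp_neg]
  field_simp
  ring

lemma deriv_log_one_add_exp (s : ℝ) : deriv (fun u => log (1 + exp u)) s = sigmoid s :=
  (hasDerivAt_log_one_add_exp s).deriv

lemma sigmoid_le_exp (s : ℝ) : sigmoid s ≤ exp s := by
  rw [sigmoid_def, exp_neg, inv_le_iff_one_le_mul₀ (by positivity)]
  have : exp s * (exp s)⁻¹ = 1 := mul_inv_cancel₀ (exp_pos s).ne'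
  nlinarith [exp_pos s]

lemma sigmoid_mul_sub_le_exp (C s : ℝ) : sigmoid s * (C - s) ≤ exp (C - 1) := by
  rcases le_or_gt (C - s) 0 with h | h
  · exact (mul_nonpos_of_nonneg_of_nonpos (sigmoid_nonneg s) h).trans (exp_pos _).le
  · calc sigmoid s * (C - s) ≤ exp s * exp (C - s - 1) := by
          gcongr
          · exact sigmoid_le_exp s
          · linarith [add_one_le_exp (C - s - 1)]
      _ = exp (C - 1) := by rw [← exp_add]; ring_nf

end Real

lemma le_add_mul_of_forall_succ_le_add {f : ℕ → ℝ} {δ : ℝ} (h : ∀ n, f (n + 1) ≤ f n + δ)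
    (n : ℕ) : f n ≤ f 0 + n * δ := by
  induction n with
  | zero => simp
  | succ n ih => push_cast; linarith [h n]

variable {E : Type*} [NormedAddCommGroup E]

section NormedSpace

variable [NormedSpace ℝ E]

lemma norm_inv_norm_smul_le_one (w : E) : ‖‖w‖⁻¹ • w‖ ≤ 1 := by
  rcases eq_or_ne w 0 with rfl | hw
  · simp
  · exact (norm_smul_inv_norm hw).le

/-- The direction `z_j` of α-SGD at the iterate `w` for the example `(x, y)`. -/
noncomputable def alphaDirection (α y : ℝ) (x w : E) : E :=
  -y • x + α • (‖w‖⁻¹ • w)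

lemma norm_alphaDirection_le {α y : ℝ} {x : E} (w : E) (hα : 0 ≤ α) (hy : |y| ≤ 1)
    (hx : ‖x‖ ≤ 1) : ‖alphaDirection α y x w‖ ≤ 1 + α := by
  calc ‖alphaDirection α y x w‖ ≤ |y| * ‖x‖ + α * ‖‖w‖⁻¹ • w‖ := by
        unfold alphaDirection
        refine (norm_add_le _ _).trans_eq ?_
        rw [norm_smul, norm_smul, Real.norm_eq_abs, Real.norm_eq_abs, abs_neg, abs_of_nonneg hα]
    _ ≤ 1 * 1 + α * 1 := add_le_add (mul_le_mul hy hx (norm_nonneg _) zero_le_one)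
        (mul_le_mul_of_nonneg_left (norm_inv_norm_smul_le_one w) hα)
    _ = 1 + α := by ring

end NormedSpace

section InnerProductSpace

variable [InnerProductSpace ℝ E]

lemma inner_alphaDirection_le {α y γ : ℝ} {x v : E} (w : E) (hα : 0 ≤ α) (hv : ‖v‖ ≤ 1)
    (hmargin : γ ≤ y * ⟪v, x⟫) : ⟪v, alphaDirection α y x w⟫ ≤ -(γ - α) := by
  have hunit : ⟪v, ‖w‖⁻¹ • w⟫ ≤ 1 :=
    (real_inner_le_norm _ _).trans
      (mul_le_one₀ hv (norm_nonneg _) (norm_inv_norm_smul_le_one w))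
  rw [alphaDirection, inner_add_right, real_inner_smul_right, real_inner_smul_right]
  nlinarith

lemma norm_sub_smul_sub_sq_le (w v z : E) {η g : ℝ} (hη : 0 ≤ η) (hg₀ : 0 ≤ g) (hg₁ : g ≤ 1)
    (hz : η * ‖z‖ ^ 2 ≤ 2) :
    ‖w - (η * g) • z - v‖ ^ 2 ≤ ‖w - v‖ ^ 2 + 2 * (η * g) * (1 - ⟪w - v, z⟫) := by
  have hsq : (η * g) ^ 2 * ‖z‖ ^ 2 ≤ 2 * (η * g) := by
    have := mul_le_mul_of_nonneg_left hz (by positivity : 0 ≤ η * g ^ 2)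
    nlinarith [mul_le_mul_of_nonneg_left hg₁ (by positivity : 0 ≤ η * g)]
  rw [sub_right_comm, norm_sub_sq_real, real_inner_smul_right, norm_smul, Real.norm_eq_abs,
    mul_pow, sq_abs]
  linarith

lemma norm_logistic_step_sub_sq_le (w v z : E) {η L : ℝ} (hη₀ : 0 ≤ η) (hη₁ : η ≤ 1)
    (hz : η * ‖z‖ ^ 2 ≤ 2) (hv : ⟪v, z⟫ ≤ -L) :
    ‖w - (η * Real.sigmoid ⟪w, z⟫) • z - v‖ ^ 2 ≤ ‖w - v‖ ^ 2 + 2 * Real.exp (-L) := by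
  set s := ⟪w, z⟫
  have hσ := Real.sigmoid_nonneg s
  have hgain : Real.sigmoid s * (1 - ⟪w - v, z⟫) ≤ Real.exp (-L) := by
    calc Real.sigmoid s * (1 - ⟪w - v, z⟫) ≤ Real.sigmoid s * (1 - L - s) :=
          mul_le_mul_of_nonneg_left (by rw [inner_sub_left]; linarith) hσ
      _ ≤ Real.exp (-L) := by
          convert Real.sigmoid_mul_sub_le_exp (1 - L) s using 2
          ring
  have hstep := norm_sub_smul_sub_sq_le w v z hη₀ hσ (Real.sigmoid_le_one s) hz
  nlinarith [Real.exp_pos (-L)]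

end InnerProductSpace

theorem alpha_sgd_distance_to_comparator_general
    (d n : ℕ) (x : Fin n → EuclideanSpace ℝ (Fin d)) (y : Fin n → ℝ)
    (hx : ∀ i, ‖x i‖ ≤ 1) (hy : ∀ i, y i = 1 ∨ y i = -1)
    (wstar : EuclideanSpace ℝ (Fin d)) (hwstar : ‖wstar‖ = 1)
    (γ α : ℝ) (hmargin : ∀ i, γ ≤ y i * ⟪wstar, x i⟫)
    (hα0 : 0 ≤ α) (hαγ : α < γ)
    (η : ℕ → ℝ) (hηpos : ∀ j, 0 < η j) (hη : ∀ j, η j ≤ min 1 (2 / (1 + α) ^ 2))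
    (idx : ℕ → Fin n)
    (w : ℕ → EuclideanSpace ℝ (Fin d)) (hw0 : w 0 = 0)
    (hupd : ∀ j : ℕ, w (j + 1) = w j - η j •
      deriv (fun u => Real.log (1 + Real.exp u))
          ⟪w j, -(y (idx j)) • x (idx j) + α • (‖w j‖⁻¹ • w j)⟫ •
        (-(y (idx j)) • x (idx j) + α • (‖w j‖⁻¹ • w j))) :
    ∀ t : ℕ, 1 ≤ t →
      ‖w t - (Real.log t / (γ - α)) • wstar‖ ^ 2 ≤
        Real.log t ^ 2 / (γ - α) ^ 2 + 2 := by
  intro t ht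
  have hγα : 0 < γ - α := sub_pos.2 hαγ
  have ht₀ : (0 : ℝ) < t := by exact_mod_cast ht
  set u := (Real.log t / (γ - α)) • wstar
  have hstep (j : ℕ) : ‖w (j + 1) - u‖ ^ 2 ≤ ‖w j - u‖ ^ 2 + 2 * Real.exp (-Real.log t) := by
    set z := alphaDirection α (y (idx j)) (x (idx j)) (w j)
    have hy₁ : |y (idx j)| ≤ 1 := by rcases hy (idx j) with h | h <;> simp [h]
    have hz := norm_alphaDirection_le (w j) hα0 hy₁ (hx (idx j))
    have hηz : η j * ‖z‖ ^ 2 ≤ 2 := by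
      have h2 := (le_div_iff₀ (by positivity)).1 ((hη j).trans (min_le_right _ _))
      have hz₂ : ‖z‖ ^ 2 ≤ (1 + α) ^ 2 := pow_le_pow_left₀ (norm_nonneg z) hz 2
      nlinarith [hηpos j]
    have hu : ⟪u, z⟫ ≤ -Real.log t := by
      have := inner_alphaDirection_le (w j) hα0 hwstar.le (hmargin (idx j))
      rw [real_inner_smul_left]
      calc _ ≤ Real.log t / (γ - α) * -(γ - α) :=
            mul_le_mul_of_nonneg_left this (div_nonneg (Real.log_natCast_nonneg t) hγα.le)
        _ = -Real.log t := by field_simp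
    rw [hupd j, Real.deriv_log_one_add_exp, smul_smul]
    exact norm_logistic_step_sub_sq_le (w j) u z (hηpos j).le
      ((hη j).trans (min_le_left _ _)) hηz hu
  have hnorm_u : ‖u‖ ^ 2 = Real.log t ^ 2 / (γ - α) ^ 2 := by
    rw [norm_smul, hwstar, mul_one, Real.norm_eq_abs, sq_abs, div_pow]
  have := le_add_mul_of_forall_succ_le_add (f := fun k => ‖w k - u‖ ^ 2) hstep t
  rwa [hw0, zero_sub, norm_neg, hnorm_u, Real.exp_neg, Real.exp_log ht₀, mul_left_comm,
    mul_inv_cancel₀ ht₀.ne', mul_one] at this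

/-- for `α`-SGD on the robust logistic loss with `w₀ = 0`, an arbitrary
index sequence, and step sizes `η_j ≤ min{1, 2/(1+α)²}`, setting
`u_t = (ln(t)/(γ−α))·w*`, one has `‖w_t − u_t‖² ≤ ln(t)²/(γ−α)² + 2` for all `t ≥ 1`. -/
theorem alpha_sgd_distance_to_comparator
    (d n : ℕ) (hn : 0 < n) (x : Fin n → EuclideanSpace ℝ (Fin d)) (y : Fin n → ℝ)
    (hx : ∀ i, ‖x i‖ ≤ 1) (hy : ∀ i, y i = 1 ∨ y i = -1)
    (wstar : EuclideanSpace ℝ (Fin d)) (hwstar : ‖wstar‖ = 1)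
    (γ α : ℝ) (hγ1 : γ ≤ 1) (hmargin : ∀ i, γ ≤ y i * ⟪wstar, x i⟫)
    (hα0 : 0 ≤ α) (hαγ : α < γ)
    (η : ℕ → ℝ) (hηpos : ∀ j, 0 < η j) (hη : ∀ j, η j ≤ min 1 (2 / (1 + α) ^ 2))
    (idx : ℕ → Fin n)
    (w : ℕ → EuclideanSpace ℝ (Fin d)) (hw0 : w 0 = 0)
    (hupd : ∀ j : ℕ, w (j + 1) = w j - η j •
      deriv (fun u => Real.log (1 + Real.exp u))
          ⟪w j, -(y (idx j)) • x (idx j) + α • (‖w j‖⁻¹ • w j)⟫ •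
        (-(y (idx j)) • x (idx j) + α • (‖w j‖⁻¹ • w j))) :
    ∀ t : ℕ, 1 ≤ t →
      ‖w t - (Real.log t / (γ - α)) • wstar‖ ^ 2 ≤
        Real.log t ^ 2 / (γ - α) ^ 2 + 2 :=
  alpha_sgd_distance_to_comparator_general d n x y hx hy wstar hwstar γ α hmargin hα0 hαγ η hηpos hη
    idx w hw0 hupd
end
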